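/- The duality map δ: Σ* → Σ* defined by δ(ε) = ε, δ(a u) = δ(u) ā and δ(ā u) = δ(u) a for a ∈ A descends to a well-defined map on the monoid of queue actions Q = Σ*/≡; i.e., if u ≡ v then δ(u) ≡ δ(v). Moreover, δ is an involution satisfying δ(uv) = δ(v)δ(u). -/

import Mathlib

/-- A basic queue action: write a letter or read a letter. -/
inductive Act (A : Type) : Type
  | wr (a : A)
  | rd (a : A)
deriving DecidableEq

variable {A : Type} [DecidableEq A]

/-- The action of words over `Act A` on queue states `A* ∪ {⊥}` (⊥ = `none`). -/
def act : Option (List A) → List (Act A) → Option (List A)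
  | q, [] => q
  | none, _ :: _ => none
  | some q, (Act.wr a) :: u => act (some (q ++ [a])) u
  | some q, (Act.rd a) :: u =>
    match q with
    | [] => none
    | b :: q' => if b = a then act (some q') u else none

/-- Two words over `Act A` are equivalent if they act identically on all queues. -/
def qequiv (u v : List (Act A)) : Prop := ∀ q : List A, act (some q) u = act (some q) v

/-- Writing the word `w`. -/
def W (w : List A) : List (Act A) := w.map Act.wr

/-- Reading the word `w` (the barred copy of `w`). -/
def R (w : List A) : List (Act A) := w.map Act.rd

/-- `shuffle s` is the word `s₁ s̄₁ s₂ s̄₂ … sₖ s̄ₖ`. -/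
def shuffle (s : List A) : List (Act A) := s.flatMap fun a => [Act.wr a, Act.rd a]

/-- The projection to write letters. -/
def prW (w : List (Act A)) : List A :=
  w.filterMap fun x => match x with | Act.wr a => some a | Act.rd _ => none

/-- The projection to read letters (with the bars removed). -/
def prR (w : List (Act A)) : List A :=
  w.filterMap fun x => match x with | Act.wr _ => none | Act.rd a => some a

theorem act_append (u v : List (Act A)) : ∀ q, act q (u ++ v) = act (act q u) v := by
  induction u with
  | nil =>
      intro q
      cases q <;> rfl
  | cons x u ih =>
      intro q
      cases q with
      | none =>
          simp only [List.cons_append, act]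
          cases v with
          | nil => rfl
          | cons _ _ => rfl
      | some q =>
          cases x with
          | wr a => simpa [act] using ih _
          | rd a =>
              cases q with
              | nil =>
                  simp only [List.cons_append, act]
                  cases v with
                  | nil => rfl
                  | cons _ _ => rfl
              | cons b q' =>
                  by_cases h : b = a
                  · simp [List.cons_append, act, h, ih]
                  · simp only [List.cons_append, act, if_neg h]
                    cases v with
                    | nil => rfl
                    | cons _ _ => rfl

/-- The setoid of queue-action equivalence. -/
def qsetoid (A : Type) [DecidableEq A] : Setoid (List (Act A)) :=
  ⟨qequiv, ⟨fun _ _ => rfl, fun h q => (h q).symm, fun h1 h2 q => (h1 q).trans (h2 q)⟩⟩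

/-- The monoid of queue actions. -/
def QAct (A : Type) [DecidableEq A] : Type := Quotient (qsetoid A)

theorem act_none : ∀ v : List (Act A), act (none : Option (List A)) v = none
  | [] => rfl
  | _ :: _ => rfl

theorem qequiv_append {u u' v v' : List (Act A)} (hu : qequiv u u') (hv : qequiv v v') :
    qequiv (u ++ v) (u' ++ v') := by
  intro q
  rw [act_append, act_append, hu q]
  cases h : act (some q) u' with
  | none => rw [act_none, act_none]
  | some q' => exact hv q'

instance : Monoid (QAct A) where
  mul := Quotient.map₂ (· ++ ·) (fun _ _ hu _ _ hv => qequiv_append hu hv)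
  one := Quotient.mk (qsetoid A) []
  mul_assoc := by
    rintro ⟨u⟩ ⟨v⟩ ⟨w⟩
    exact congrArg (Quotient.mk (qsetoid A)) (List.append_assoc u v w)
  one_mul := by
    rintro ⟨u⟩
    rfl
  mul_one := by
    rintro ⟨u⟩
    exact congrArg (Quotient.mk (qsetoid A)) (List.append_nil u)

/-- The class of a word in the monoid of queue actions. -/
def cls (w : List (Act A)) : QAct A := Quotient.mk (qsetoid A) w

theorem cls_mul (u v : List (Act A)) : cls u * cls v = cls (u ++ v) := rfl

/-- The duality map on single letters. -/
def dualAct : Act A → Act A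
  | Act.wr a => Act.rd a
  | Act.rd a => Act.wr a

/-- The duality map `δ` on words, with `δ(ε) = ε`, `δ(a u) = δ(u) ā`, `δ(ā u) = δ(u) a`. -/
def dual (w : List (Act A)) : List (Act A) := (w.map dualAct).reverse

omit [DecidableEq A] in
theorem dualAct_involutive : Function.Involutive (dualAct (A := A)) := by
  rintro (a | a) <;> rfl

omit [DecidableEq A] in
theorem dual_append (u v : List (Act A)) : dual (u ++ v) = dual v ++ dual u := by
  simp [dual]

omit [DecidableEq A] in
theorem dual_dual (u : List (Act A)) : dual (dual u) = u := by
  simp [dual, dualAct_involutive.comp_self]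

omit [DecidableEq A] in
theorem dual_cons (x : Act A) (u : List (Act A)) : dual (x :: u) = dual u ++ [dualAct x] :=
  dual_append [x] u

theorem act_append_eq_some_iff (u v : List (Act A)) (p p' : List A) :
    act (some p) (u ++ v) = some p' ↔ ∃ m, act (some p) u = some m ∧ act (some m) v = some p' := by
  rw [act_append]
  cases act (some p) u with
  | none => simp [act_none]
  | some m => simp

theorem act_wr_singleton (q : List A) (a : A) : act (some q) [Act.wr a] = some (q ++ [a]) := rfl

theorem act_rd_singleton_eq_some_iff (q q' : List A) (a : A) :
    act (some q) [Act.rd a] = some q' ↔ q = a :: q' := by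
  cases q with
  | nil => simp [act]
  | cons b q =>
    by_cases h : b = a
    · simp [act, h, eq_comm]
    · simp [act, h]

theorem act_dualAct_singleton_eq_some_iff (x : Act A) (r r' : List A) :
    act (some r) [dualAct x] = some r' ↔ act (some r'.reverse) [x] = some r.reverse := by
  cases x with
  | wr a =>
    rw [dualAct, act_rd_singleton_eq_some_iff, act_wr_singleton, Option.some_inj,
      ← List.reverse_cons, List.reverse_inj, eq_comm]
  | rd a =>
    rw [dualAct, act_rd_singleton_eq_some_iff, act_wr_singleton, Option.some_inj,
      ← List.reverse_concat', List.reverse_inj, eq_comm]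

/-- Running `δ(u)` from `r` to `r'` is running `u` backwards, from the mirror image of `r'` to that
of `r`: this holds letter by letter, and both sides compose along intermediate queues. -/
theorem act_dual_eq_some_iff (u : List (Act A)) (r r' : List A) :
    act (some r) (dual u) = some r' ↔ act (some r'.reverse) u = some r.reverse := by
  induction u generalizing r' with
  | nil => simp [dual, act, eq_comm]
  | cons x u ih =>
    rw [dual_cons, act_append_eq_some_iff, show x :: u = [x] ++ u from rfl,
      act_append_eq_some_iff]
    constructor
    · rintro ⟨m, hu, hx⟩
      exact ⟨m.reverse, (act_dualAct_singleton_eq_some_iff x m r').1 hx, (ih m).1 hu⟩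
    · rintro ⟨m, hx, hu⟩
      refine ⟨m.reverse, (ih m.reverse).2 (by rwa [List.reverse_reverse]), ?_⟩
      rwa [act_dualAct_singleton_eq_some_iff, List.reverse_reverse]

theorem qequiv.dual {u v : List (Act A)} (h : qequiv u v) : qequiv (dual u) (dual v) := by
  intro q
  refine Option.ext fun r' => ?_
  rw [act_dual_eq_some_iff, act_dual_eq_some_iff, h]

theorem stmt13_general :
    (∀ u v : List (Act A), qequiv u v → qequiv (dual u) (dual v)) ∧
    (∀ u : List (Act A), dual (dual u) = u) ∧
    (∀ u v : List (Act A), dual (u ++ v) = dual v ++ dual u) :=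
  ⟨fun _ _ => qequiv.dual, dual_dual, dual_append⟩

/-- The duality map `δ` descends to the monoid of queue actions, and it is an
anti-morphism and an involution. -/
theorem stmt13 [Fintype A] [Nontrivial A] :
    (∀ u v : List (Act A), qequiv u v → qequiv (dual u) (dual v)) ∧
    (∀ u : List (Act A), dual (dual u) = u) ∧
    (∀ u v : List (Act A), dual (u ++ v) = dual v ++ dual u) :=
  stmt13_general
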